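/- arXiv:1812.10219 — 4 statements merged into one kernel-verified Lean document; each statement's English description precedes it below -/
import Mathlib

section
/- Let (X,G) be a topological dynamical system on a compact metric space (X,d) with G locally compact σ-compact amenable. Define D(x,y) as the supremum over all left Følner sequences 𝓕 = (F_n) of limsup_{n→∞} (1/|F_n|) ∫_{F_n} d(tx,ty) dm(t). Then D is G-invariant: D(sx,sy) = D(x,y) for all x,y ∈ X and s ∈ G. -/
open MeasureTheory Filter Topology Pointwise

/-- A (left) Følner sequence: a sequence of non-empty compact subsets `F n` of `G` such that
`m (g • F n △ F n) / m (F n) → 0` for every `g ∈ G`. -/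
def IsFolner {G : Type*} [Group G] [TopologicalSpace G] [MeasurableSpace G]
    (m : Measure G) (F : ℕ → Set G) : Prop :=
  (∀ n, IsCompact (F n)) ∧ (∀ n, (F n).Nonempty) ∧
    ∀ g : G, Tendsto (fun n => m (symmDiff (g • F n) (F n)) / m (F n)) atTop (𝓝 0)

/-- Amenability of `G` (with Haar measure `m`), expressed by the existence of a left Følner
sequence. -/
def AmenableGroup {G : Type*} [Group G] [TopologicalSpace G] [MeasurableSpace G]
    (m : Measure G) : Prop :=
  ∃ F : ℕ → Set G, IsFolner m F

/-- The Besicovitch pseudometric `D_𝓕` associated to a Følner sequence `F`. -/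
noncomputable def besicovitchD {G : Type*} [Group G] [MeasurableSpace G] {X : Type*}
    [SMul G X] [PseudoMetricSpace X] (m : Measure G) (F : ℕ → Set G) (x y : X) : ℝ :=
  limsup (fun n => (∫ t in F n, dist (t • x) (t • y) ∂m) / (m (F n)).toReal) atTop

/-- The Weyl pseudometric `D`, the supremum of `D_𝓕` over all left Følner sequences `𝓕`. -/
noncomputable def weylD {G : Type*} [Group G] [TopologicalSpace G] [MeasurableSpace G]
    {X : Type*} [SMul G X] [PseudoMetricSpace X] (m : Measure G) (x y : X) : ℝ :=
  sSup {r | ∃ F : ℕ → Set G, IsFolner m F ∧ r = besicovitchD m F x y}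

/-- (Weyl-)mean equicontinuity of the action of `G` on `X`. -/
def MeanEquicontinuous {G : Type*} [Group G] [TopologicalSpace G] [MeasurableSpace G]
    (X : Type*) [SMul G X] [PseudoMetricSpace X] (m : Measure G) : Prop :=
  ∀ ε > 0, ∃ δ > 0, ∀ x y : X, dist x y < δ → weylD m x y < ε

/-- Besicovitch-`𝓕`-mean equicontinuity with respect to the Følner sequence `F`. -/
def FMeanEquicontinuous {G : Type*} [Group G] [MeasurableSpace G]
    (X : Type*) [SMul G X] [PseudoMetricSpace X] (m : Measure G) (F : ℕ → Set G) : Prop :=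
  ∀ ε > 0, ∃ δ > 0, ∀ x y : X, dist x y < δ → besicovitchD m F x y < ε

/-- The pseudometric `D_f` associated to a function `f : X → ℂ`. -/
noncomputable def besicovitchDf {G : Type*} [Group G] [MeasurableSpace G] {X : Type*}
    [SMul G X] (m : Measure G) (F : ℕ → Set G) (f : X → ℂ) (x y : X) : ℝ :=
  limsup (fun n => (∫ t in F n, ‖f (t • x) - f (t • y)‖ ∂m) / (m (F n)).toReal)
    atTop

/-- The Weyl version of `D_f`: supremum over all Følner sequences. -/
noncomputable def weylDf {G : Type*} [Group G] [TopologicalSpace G] [MeasurableSpace G]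
    {X : Type*} [SMul G X] (m : Measure G) (f : X → ℂ) (x y : X) : ℝ :=
  sSup {r | ∃ F : ℕ → Set G, IsFolner m F ∧ r = besicovitchDf m F f x y}

/-- A measure `μ` on `X` is invariant under the action of `G`. -/
def IsInvariantMeasure (G : Type*) [Group G] {X : Type*} [MulAction G X]
    [MeasurableSpace X] (μ : Measure X) : Prop :=
  ∀ g : G, MeasurePreserving (fun x : X => g • x) μ μ

/-- A measure `μ` on `X` is invariant and ergodic under the action of `G`. -/
def IsErgodicMeasure (G : Type*) [Group G] {X : Type*} [MulAction G X]
    [MeasurableSpace X] (μ : Measure X) : Prop :=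
  IsInvariantMeasure G μ ∧
    ∀ A : Set X, MeasurableSet A →
      (∀ g : G, μ (symmDiff A ((fun x : X => g • x) ⁻¹' A)) = 0) → μ A = 0 ∨ μ A = 1

/-- A (topological) factor map: a continuous equivariant surjection. -/
def IsFactorMap (G : Type*) [Group G] {X Y : Type*} [TopologicalSpace X]
    [TopologicalSpace Y] [MulAction G X] [MulAction G Y] (h : X → Y) : Prop :=
  Continuous h ∧ Function.Surjective h ∧ ∀ (g : G) (x : X), h (g • x) = g • h x

/-- `h` is an isomorphism mod 0 with respect to `μ` and `ν`: `h` pushes `μ` to `ν` and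
restricts to a bi-measurable bijection between full measure sets. -/
def IsIsoMod0 {X Y : Type*} [MeasurableSpace X] [MeasurableSpace Y]
    (h : X → Y) (μ : Measure X) (ν : Measure Y) : Prop :=
  Measurable h ∧ Measure.map h μ = ν ∧
    ∃ (M : Set X) (N : Set Y) (g : Y → X), MeasurableSet M ∧ MeasurableSet N ∧
      μ M = 1 ∧ ν N = 1 ∧ Measurable g ∧ Set.BijOn h M N ∧
      (∀ x ∈ M, g (h x) = x) ∧ (∀ y ∈ N, h (g y) = y)

/-- A topo-isomorphy: a factor map which is an isomorphism mod 0 with respect to every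
`G`-invariant probability measure and its push-forward. -/
def IsTopoIsomorphy (G : Type*) [Group G] {X Y : Type*} [TopologicalSpace X]
    [TopologicalSpace Y] [MeasurableSpace X] [MeasurableSpace Y] [MulAction G X]
    [MulAction G Y] (h : X → Y) : Prop :=
  IsFactorMap G h ∧
    ∀ μ : Measure X, IsProbabilityMeasure μ → IsInvariantMeasure G μ →
      IsIsoMod0 h μ (Measure.map h μ)

/-- The action of `G` on `X` is equicontinuous. -/
def EquicontinuousAction (G : Type*) [Group G] (X : Type*) [SMul G X]
    [PseudoMetricSpace X] : Prop :=
  ∀ ε > 0, ∃ δ > 0, ∀ x y : X, dist x y < δ → ∀ g : G, dist (g • x) (g • y) < ε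

/-- `A` is a minimal set: non-empty, closed, invariant, and every orbit is dense in `A`. -/
def IsMinimalSet (G : Type*) [Group G] {X : Type*} [TopologicalSpace X] [MulAction G X]
    (A : Set X) : Prop :=
  A.Nonempty ∧ IsClosed A ∧ (∀ g : G, g • A = A) ∧
    ∀ x ∈ A, closure (MulAction.orbit G x) = A

/-- `A` is a transitive set: non-empty, closed, invariant, containing a point with dense
orbit in `A`. -/
def IsTransitiveSet (G : Type*) [Group G] {X : Type*} [TopologicalSpace X] [MulAction G X]
    (A : Set X) : Prop :=
  A.Nonempty ∧ IsClosed A ∧ (∀ g : G, g • A = A) ∧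
    ∃ x ∈ A, closure (MulAction.orbit G x) = A

/-- `A` carries exactly one `G`-invariant Borel probability measure. -/
def UniquelyErgodicOn (G : Type*) [Group G] {X : Type*} [MulAction G X]
    [MeasurableSpace X] (A : Set X) : Prop :=
  ∃! μ : Measure X, IsProbabilityMeasure μ ∧ IsInvariantMeasure G μ ∧ μ A = 1

/-- The (topological) support of a measure. -/
def measSupport {X : Type*} [TopologicalSpace X] [MeasurableSpace X]
    (μ : Measure X) : Set X :=
  {x | ∀ U : Set X, IsOpen U → x ∈ U → 0 < μ U}

/-!
Right translation `F ↦ F s` preserves the Følner property: for a Haar measure `m` one has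
`Δ(s) · m(A s) = m(A)` for relatively compact `A`, where `Δ` is the modular character, and
the factor `Δ(s)` cancels in the Følner ratio `m(g F s △ F s) / m(F s)`. (Without inner
regularity of `m` the identity is only available for relatively compact sets, which suffices
since the `F n` are compact.) The substitution `u = t s` turns the average of `d(t s x, t s y)`
over `F` into the average of `d(u x, u y)` over `F s`, the factor `Δ(s)` again cancelling
between integral and normalisation. Hence `D_F(s x, s y) = D_{F s}(x, y)`, and since
`F ↦ F s` is a bijection of the Følner sequences, the two suprema defining `D(s x, s y)` and
`D(x, y)` range over the same set of values.
-/

section RightTranslation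

open MulOpposite

lemma Set.preimage_mul_right_op_smul {G : Type*} [Group G] (s : G) (S : Set G) :
    (· * s) ⁻¹' (op s • S) = S := by
  ext t
  simp [Set.mem_smul_set_iff_inv_smul_mem, ← op_inv]

namespace MeasureTheory.Measure

variable {G : Type*} [Group G] [TopologicalSpace G] [IsTopologicalGroup G]
  [LocallyCompactSpace G] [MeasurableSpace G] [BorelSpace G]
  (m : Measure G) [m.IsHaarMeasure] (s : G)

lemma map_mul_right_apply_of_isCompact_closure {S : Set G} (hS : IsCompact (closure S)) :
    map (· * s) m S = modularCharacterFun s * m S := by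
  rw [modularCharacterFun_eq_haarScalarFactor m s]
  exact measure_isMulInvariant_eq_smul_of_isCompact_closure _ m hS

lemma restrict_map_mul_right_of_isCompact {K : Set G} (hK : IsCompact K) :
    (map (· * s) m).restrict K = (modularCharacterFun s • m).restrict K := by
  ext B hB
  rw [restrict_apply hB, restrict_apply hB, smul_apply, ENNReal.smul_def, smul_eq_mul]
  exact map_mul_right_apply_of_isCompact_closure m s
    (hK.closure_of_subset Set.inter_subset_right)

lemma modularCharacterFun_mul_measure_op_smul {S : Set G} (hS : IsCompact (closure S)) :
    modularCharacterFun s * m (op s • S) = m S := by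
  have hsS : IsCompact (closure (op s • S)) := by
    rw [closure_smul]
    exact hS.smul _
  calc modularCharacterFun s * m (op s • S)
      = map (MeasurableEquiv.mulRight s) m (op s • S) :=
        (map_mul_right_apply_of_isCompact_closure m s hsS).symm
    _ = m S := by
        rw [MeasurableEquiv.map_apply, MeasurableEquiv.coe_mulRight, Set.preimage_mul_right_op_smul]

theorem setIntegral_comp_mul_right {E : Type*} [NormedAddCommGroup E] [NormedSpace ℝ E]
    (f : G → E) {K : Set G} (hK : IsCompact K) :
    ∫ t in K, f (t * s) ∂m = modularCharacterFun s • ∫ u in op s • K, f u ∂m := by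
  calc ∫ t in K, f (t * s) ∂m
      = ∫ u, f u ∂(map (MeasurableEquiv.mulRight s) m).restrict (op s • K) := by
        rw [MeasurableEquiv.restrict_map, integral_map_equiv, MeasurableEquiv.coe_mulRight,
          Set.preimage_mul_right_op_smul]
    _ = modularCharacterFun s • ∫ u in op s • K, f u ∂m := by
        rw [MeasurableEquiv.coe_mulRight, restrict_map_mul_right_of_isCompact m s (hK.smul _),
          restrict_smul, integral_smul_nnreal_measure]

end MeasureTheory.Measure

open MeasureTheory.Measure

variable {G : Type*} [Group G] [TopologicalSpace G] [IsTopologicalGroup G]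
  [LocallyCompactSpace G] [MeasurableSpace G] [BorelSpace G]
  {m : Measure G} [m.IsHaarMeasure]

theorem IsFolner.op_smul {F : ℕ → Set G} (hF : IsFolner m F) (s : G) :
    IsFolner m (fun n => op s • F n) := by
  obtain ⟨hcompact, hne, hratio⟩ := hF
  refine ⟨fun n => (hcompact n).smul _, fun n => (hne n).smul_set, fun g => ?_⟩
  refine (hratio g).congr fun n => ?_
  have hsymmDiff : IsCompact (closure (symmDiff (g • F n) (F n))) :=
    (((hcompact n).smul g).union (hcompact n)).closure_of_subset symmDiff_le_sup
  have hΔ : (modularCharacterFun s : ENNReal) ≠ 0 := by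
    exact_mod_cast (modularCharacterFun_pos s).ne'
  rw [smul_comm g (op s), ← Set.smul_set_symmDiff,
    ← modularCharacterFun_mul_measure_op_smul m s hsymmDiff,
    ← modularCharacterFun_mul_measure_op_smul m s (hcompact n).closure,
    ENNReal.mul_div_mul_left _ _ hΔ ENNReal.coe_ne_top]

theorem besicovitchD_smul_smul {X : Type*} [PseudoMetricSpace X] [MulAction G X]
    {F : ℕ → Set G} (hF : ∀ n, IsCompact (F n)) (s : G) (x y : X) :
    besicovitchD m F (s • x) (s • y) = besicovitchD m (fun n => op s • F n) x y := by
  unfold besicovitchD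
  congr with n
  have hΔ : (modularCharacterFun s : ℝ) ≠ 0 :=
    NNReal.coe_ne_zero.mpr (modularCharacterFun_pos s).ne'
  simp_rw [smul_smul]
  rw [setIntegral_comp_mul_right m s (fun u => dist (u • x) (u • y)) (hF n),
    ← modularCharacterFun_mul_measure_op_smul m s (hF n).closure, ENNReal.toReal_mul,
    ENNReal.coe_toReal, NNReal.smul_def, smul_eq_mul, mul_div_mul_left _ _ hΔ]

end RightTranslation

theorem weylD_smul_invariant_general {G : Type*} [Group G] [TopologicalSpace G]
    [IsTopologicalGroup G] [LocallyCompactSpace G] [MeasurableSpace G]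
    [BorelSpace G] (m : Measure G) [m.IsHaarMeasure]
    {X : Type*} [MetricSpace X] [MulAction G X]
    (s : G) (x y : X) :
    weylD m (s • x) (s • y) = weylD m x y := by
  unfold weylD
  congr 1
  ext r
  constructor
  · rintro ⟨F, hF, rfl⟩
    exact ⟨_, hF.op_smul s, besicovitchD_smul_smul hF.1 s x y⟩
  · rintro ⟨F, hF, rfl⟩
    refine ⟨_, hF.op_smul s⁻¹, ?_⟩
    rw [besicovitchD_smul_smul (hF.op_smul s⁻¹).1]
    simp only [smul_smul, ← MulOpposite.op_mul, inv_mul_cancel, MulOpposite.op_one, one_smul]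

/-- The Weyl pseudometric `D` is `G`-invariant. -/
theorem weylD_smul_invariant {G : Type*} [Group G] [TopologicalSpace G]
    [IsTopologicalGroup G] [LocallyCompactSpace G] [SigmaCompactSpace G] [MeasurableSpace G]
    [BorelSpace G] (m : Measure G) [m.IsHaarMeasure] (hG : AmenableGroup m)
    {X : Type*} [MetricSpace X] [CompactSpace X] [MulAction G X] [ContinuousSMul G X]
    (s : G) (x y : X) :
    weylD m (s • x) (s • y) = weylD m x y :=
  weylD_smul_invariant_general m s x y
end

section
/- Let X and Y be compact metric spaces, μ a Borel probability measure on X, and h : X → Y a Borel measurable map. If the composition operator U : L²(Y, h(μ)) → L²(X, μ), f ↦ f ∘ h, is a unitary operator, then h is an isomorphism mod 0 with respect to μ and the push-forward measure h(μ); that is, there exist Borel sets M ⊆ X and N ⊆ Y with μ(M) = h(μ)(N) = 1 and a bi-measurable measure-preserving bijection from M to N which agrees with h on M. -/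
open MeasureTheory Filter Topology Pointwise

/-!
Surjectivity of the composition operator puts every indicator `c • 1_A` in its range, so every
Borel set of `X` agrees `μ`-a.e. with the preimage of a Borel set of `Y`. Doing this for a
countable base of `X`, a.e. point `x` is located in every basic open set by `h x` alone, so `h` is
injective on a Borel set `M` of full measure. By Lusin–Souslin, `h '' M` is Borel and `h` has a
Borel left inverse on `M`.
-/

open Set

section IsoMod0

variable {X Y : Type*} [MeasurableSpace X] {μ : Measure X} {h : X → Y}

theorem exists_preimage_ae_eq_of_surjective_comp [MeasurableSpace Y] {E : Type*}
    [NormedAddCommGroup E] [Nontrivial E] {p : ENNReal} (U : Lp E p (μ.map h) → Lp E p μ) (hU : Function.Surjective U)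
    (hcomp : ∀ f : Lp E p (μ.map h), (U f : X → E) =ᵐ[μ] fun x => (f : Y → E) (h x))
    {A : Set X} (hA : MeasurableSet A) (hμA : μ A ≠ ⊤) :
    ∃ B : Set Y, MeasurableSet B ∧ A =ᵐ[μ] h ⁻¹' B := by
  obtain ⟨c, hc⟩ := exists_ne (0 : E)
  obtain ⟨f, hf⟩ := hU (indicatorConstLp p hA hμA c)
  refine ⟨(f : Y → E) ⁻¹' {c},
    (Lp.stronglyMeasurable f).measurableSet_eq_fun stronglyMeasurable_const, ?_⟩
  have hind : ∀ᵐ x ∂μ, A.indicator (fun _ => c) x = (f : Y → E) (h x) := by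
    filter_upwards [hcomp f, indicatorConstLp_coeFn (p := p) (hs := hA) (hμs := hμA) (c := c)]
      with x hfx hAx
    rw [← hAx, ← hf, hfx]
  refine eventuallyEq_set.2 (hind.mono fun x hx => ?_)
  rw [mem_preimage, mem_preimage, mem_singleton_iff, ← hx]
  by_cases hxA : x ∈ A
  · simp [hxA]
  · simp [hxA, hc.symm]

theorem exists_measurableSet_ae_injOn [TopologicalSpace X] [SecondCountableTopology X]
    [T0Space X] (hopen : ∀ V : Set X, IsOpen V → ∃ B : Set Y, V =ᵐ[μ] h ⁻¹' B) :
    ∃ M : Set X, MeasurableSet M ∧ M ∈ ae μ ∧ InjOn h M := by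
  let 𝒰 := TopologicalSpace.countableBasis X
  have h𝒰 := TopologicalSpace.isBasis_countableBasis X
  choose! B hB using fun V (hV : V ∈ 𝒰) =>
    hopen V (TopologicalSpace.isOpen_of_mem_countableBasis hV)
  have hsep : ∀ᵐ x ∂μ, ∀ V ∈ 𝒰, x ∈ V ↔ h x ∈ B V :=
    (ae_ball_iff (TopologicalSpace.countable_countableBasis X)).2 fun V hV =>
      eventuallyEq_set.1 (hB V hV)
  obtain ⟨M, hMae, hM, hMsep⟩ := hsep.exists_measurable_mem
  refine ⟨M, hM, hMae, fun x hx x' hx' hxx' => (h𝒰.inseparable_iff.2 fun V hV => ?_).eq⟩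
  rw [hMsep x hx V hV, hMsep x' hx' V hV, hxx']

theorem exists_measurable_leftInvOn_of_injOn [StandardBorelSpace X] [Nonempty X]
    [MeasurableSpace Y] [MeasurableSpace.CountablySeparated Y] (hh : Measurable h) {M : Set X}
    (hM : MeasurableSet M) (hinj : InjOn h M) : ∃ g : Y → X, Measurable g ∧ LeftInvOn g h M := by
  have := hM.standardBorel
  have hemb : MeasurableEmbedding (M.domRestrict h) :=
    (hh.comp measurable_subtype_coe).measurableEmbedding (injOn_iff_injective.1 hinj)
  obtain ⟨g, hg, hgh⟩ := hemb.exists_measurable_extend measurable_subtype_coe fun _ => inferInstance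
  exact ⟨g, hg, fun x hx => congr_fun hgh ⟨x, hx⟩⟩

theorem isIsoMod0_of_ae_injOn [StandardBorelSpace X] [IsProbabilityMeasure μ] [MeasurableSpace Y]
    [MeasurableSpace.CountablySeparated Y] (hh : Measurable h) {M : Set X} (hM : MeasurableSet M)
    (hMae : M ∈ ae μ) (hinj : InjOn h M) : IsIsoMod0 h μ (μ.map h) := by
  have := nonempty_of_isProbabilityMeasure μ
  obtain ⟨g, hg, hgh⟩ := exists_measurable_leftInvOn_of_injOn hh hM hinj
  have hN : MeasurableSet (h '' M) := hM.image_of_measurable_injOn hh hinj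
  have hμM : μ M = 1 := (prob_compl_eq_zero_iff hM).1 (mem_ae_iff.1 hMae)
  have hμN : μ.map h (h '' M) = 1 := by
    rw [Measure.map_apply hh hN]
    exact le_antisymm prob_le_one (hμM ▸ measure_mono (subset_preimage_image h M))
  refine ⟨hh, rfl, M, h '' M, g, hM, hN, hμM, hμN, hg, hinj.bijOn_image, hgh, ?_⟩
  rintro _ ⟨x, hx, rfl⟩
  rw [hgh hx]

end IsoMod0

/-- If the composition operator `f ↦ f ∘ h` is a unitary operator from
`L²(Y, h(μ))` to `L²(X, μ)`, then `h` is an isomorphism mod 0 with respect to `μ` and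
`h(μ)`. -/
theorem isoMod0_of_unitary_comp {X Y : Type*} [MetricSpace X] [CompactSpace X]
    [MeasurableSpace X] [BorelSpace X] [MetricSpace Y] [CompactSpace Y]
    [MeasurableSpace Y] [BorelSpace Y] (μ : Measure X) [IsProbabilityMeasure μ]
    (h : X → Y) (hmeas : Measurable h)
    (U : Lp ℂ 2 (Measure.map h μ) ≃ₗᵢ[ℂ] Lp ℂ 2 μ)
    (hU : ∀ f : Lp ℂ 2 (Measure.map h μ), (U f : X → ℂ) =ᵐ[μ] fun x => (f : Y → ℂ) (h x)) :
    IsIsoMod0 h μ (Measure.map h μ) := by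
  obtain ⟨M, hM, hMae, hinj⟩ := exists_measurableSet_ae_injOn fun V hV =>
    let ⟨B, _, hB⟩ := exists_preimage_ae_eq_of_surjective_comp U U.surjective hU
      hV.measurableSet (measure_ne_top μ V)
    ⟨B, hB⟩
  exact isIsoMod0_of_ae_injOn hmeas hM hMae hinj
end

section
/- Suppose (X,G) is a topo-isomorphic extension of (Y,G) via the factor map h : X → Y. If μ₁ and μ₂ are two distinct ergodic G-invariant measures on X, then the push-forward measures h(μ₁) and h(μ₂) are distinct. -/
open MeasureTheory Filter Topology Pointwise

/-! The average `μ` of `μ₁` and `μ₂` is again an invariant probability measure, so `h` has a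
measurable inverse `g` defined `μ`-almost everywhere. Both `μᵢ` are absolutely continuous with
respect to `μ`, so `g` inverts `h` `μᵢ`-almost everywhere as well, and `μᵢ` is recovered from
its push-forward as `g(h(μᵢ))`. -/

open scoped ENNReal

section Invariant

variable {G : Type*} [Group G] {X : Type*} [MulAction G X] [MeasurableSpace X]

theorem IsInvariantMeasure.add {μ ν : Measure X} (hμ : IsInvariantMeasure G μ)
    (hν : IsInvariantMeasure G ν) : IsInvariantMeasure G (μ + ν) :=
  fun g ↦ (hμ g).add_measure (hν g)

theorem IsInvariantMeasure.smul {μ : Measure X} (hμ : IsInvariantMeasure G μ) (c : ℝ≥0∞) :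
    IsInvariantMeasure G (c • μ) :=
  fun g ↦ (hμ g).smul_measure c

end Invariant

section IsoMod0

variable {X Y : Type*} [MeasurableSpace X] [MeasurableSpace Y]

theorem map_map_eq_self_of_ae_leftInverse {f : X → Y} {g : Y → X} {μ : Measure X}
    (hf : Measurable f) (hg : Measurable g) (hgf : ∀ᵐ x ∂μ, g (f x) = x) :
    (μ.map f).map g = μ := by
  rw [Measure.map_map hg hf, Measure.map_congr (f := g ∘ f) (g := id) hgf, Measure.map_id]

theorem IsIsoMod0.exists_ae_leftInverse {h : X → Y} {μ : Measure X} {ν : Measure Y}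
    [IsProbabilityMeasure μ] (hiso : IsIsoMod0 h μ ν) :
    ∃ g : Y → X, Measurable g ∧ ∀ᵐ x ∂μ, g (h x) = x := by
  obtain ⟨-, -, M, -, g, hM, -, hμM, -, hg, -, hgh, -⟩ := hiso
  have hM_ae : ∀ᵐ x ∂μ, x ∈ M := (mem_ae_iff_prob_eq_one hM).2 hμM
  exact ⟨g, hg, hM_ae.mono hgh⟩

theorem IsIsoMod0.map_injOn {h : X → Y} {μ : Measure X} {ν : Measure Y}
    [IsProbabilityMeasure μ] (hiso : IsIsoMod0 h μ ν) :
    Set.InjOn (Measure.map h) {ρ | ρ ≪ μ} := by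
  obtain ⟨g, hg, hgh⟩ := hiso.exists_ae_leftInverse
  intro ρ₁ hρ₁ ρ₂ hρ₂ hmap
  rw [← map_map_eq_self_of_ae_leftInverse hiso.1 hg (hρ₁.ae_le hgh),
    ← map_map_eq_self_of_ae_leftInverse hiso.1 hg (hρ₂.ae_le hgh), hmap]

end IsoMod0

theorem topoIsomorphy_injective_on_ergodic_general {G : Type*} [Group G]
    {X Y : Type*} [MetricSpace X] [MulAction G X]
    [MeasurableSpace X] [MetricSpace Y] [MulAction G Y]
    [MeasurableSpace Y]
    (h : X → Y) (hh : IsTopoIsomorphy G h)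
    (μ₁ μ₂ : Measure X) [IsProbabilityMeasure μ₁] [IsProbabilityMeasure μ₂]
    (h₁ : IsErgodicMeasure G μ₁) (h₂ : IsErgodicMeasure G μ₂) (hne : μ₁ ≠ μ₂) :
    Measure.map h μ₁ ≠ Measure.map h μ₂ := by
  set μ : Measure X := (2⁻¹ : ℝ≥0∞) • (μ₁ + μ₂)
  have hμ_prob : IsProbabilityMeasure μ := ⟨by simp [μ, ENNReal.inv_two_add_inv_two]⟩
  have hμ_inv : IsInvariantMeasure G μ := (h₁.1.add h₂.1).smul _
  have hiso := hh.2 μ hμ_prob hμ_inv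
  have hac₁ : μ₁ ≪ μ := (Measure.AbsolutelyContinuous.rfl.add_right μ₂).smul_right (by simp)
  have hac₂ : μ₂ ≪ μ := (Measure.AbsolutelyContinuous.rfl.add_right' μ₁).smul_right (by simp)
  exact fun hmap ↦ hne (hiso.map_injOn hac₁ hac₂ hmap)

/-- A topo-isomorphy maps distinct ergodic invariant measures to distinct
push-forward measures. -/
theorem topoIsomorphy_injective_on_ergodic {G : Type*} [Group G] [TopologicalSpace G]
    [IsTopologicalGroup G] [LocallyCompactSpace G] [SigmaCompactSpace G]
    {X Y : Type*} [MetricSpace X] [CompactSpace X] [MulAction G X] [ContinuousSMul G X]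
    [MeasurableSpace X] [BorelSpace X] [MetricSpace Y] [CompactSpace Y] [MulAction G Y]
    [ContinuousSMul G Y] [MeasurableSpace Y] [BorelSpace Y]
    (h : X → Y) (hh : IsTopoIsomorphy G h)
    (μ₁ μ₂ : Measure X) [IsProbabilityMeasure μ₁] [IsProbabilityMeasure μ₂]
    (h₁ : IsErgodicMeasure G μ₁) (h₂ : IsErgodicMeasure G μ₂) (hne : μ₁ ≠ μ₂) :
    Measure.map h μ₁ ≠ Measure.map h μ₂ :=
  topoIsomorphy_injective_on_ergodic_general h hh μ₁ μ₂ h₁ h₂ hne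
end

section
/- Assume (X,G) is a topo-isomorphic extension of an equicontinuous system (Y,G) with factor map h. If μ and ν are distinct ergodic G-invariant measures on X supported on transitive closed invariant sets A_μ and A_ν respectively, then h(A_μ) and h(A_ν) are disjoint. -/
/-!
Equicontinuity makes the closure `E` of the acting maps in `C(Y, Y)` a compact group, and
averaging a continuous `f` over the Haar measure of `E` yields a continuous `G`-invariant function
whose integral against any invariant measure equals that of `f`. Such a function is constant on
orbit closures, which in an equicontinuous system are minimal, so every minimal subset of `Y` is
uniquely ergodic. If `h '' A` and `h '' B` met, they would be the same orbit closure, the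
push-forwards of `μ` and `ν` would coincide, and the isomorphism mod 0 for `(μ + ν) / 2` would
force `μ = ν`.
-/

open MeasureTheory Filter Topology Pointwise

open MeasureTheory Filter Topology Set MulAction
open scoped ENNReal

theorem ContinuousMap.isCompact_closure_range_of_equicontinuous {ι α β : Type*}
    [TopologicalSpace α] [CompactSpace α] [MetricSpace β] [CompactSpace β] {F : ι → C(α, β)}
    (hF : Equicontinuous fun i ↦ ⇑(F i)) : IsCompact (closure (range F)) := by
  let e := (ContinuousMap.isometryEquivBoundedOfCompact α β).toHomeomorph
  have hrange : range (fun f : range (e ∘ F) ↦ ⇑(f : BoundedContinuousFunction α β)) =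
      range fun i ↦ ⇑(F i) := by
    ext; simp [e]; rfl
  have hcl : IsCompact (closure (range (e ∘ F))) := by
    refine BoundedContinuousFunction.arzela_ascoli univ isCompact_univ _ (by simp) ?_
    rw [equicontinuous_iff_range, hrange, ← equicontinuous_iff_range]
    exact hF
  rwa [range_comp, ← e.image_closure, e.isCompact_image] at hcl

section GroupAverage

variable {K : Type*} [Group K] [MeasurableSpace K] {Y : Type*} [TopologicalSpace Y]
  [MulAction K Y] (η : Measure K)

noncomputable def groupAverage (f : C(Y, ℝ)) (x : Y) : ℝ := ∫ k, f (k⁻¹ • x) ∂η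

lemma groupAverage_smul [MeasurableMul K] [η.IsMulLeftInvariant] (f : C(Y, ℝ)) (k : K)
    (x : Y) :
    groupAverage η f (k • x) = groupAverage η f x := by
  unfold groupAverage
  rw [← integral_mul_left_eq_self _ k]
  simp [mul_inv_rev, mul_smul]

variable [TopologicalSpace K] [IsTopologicalGroup K] [CompactSpace K] [BorelSpace K]
  [ContinuousSMul K Y]

lemma continuous_groupAverage [FirstCountableTopology Y] [LocallyCompactSpace Y]
    [IsFiniteMeasure η] (f : C(Y, ℝ)) : Continuous (groupAverage η f) := by
  have hf : Continuous (Function.uncurry fun (x : Y) (k : K) ↦ f (k⁻¹ • x)) := by fun_prop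
  unfold groupAverage
  simpa using continuous_parametric_integral_of_continuous hf isCompact_univ (μ := η)

lemma integral_groupAverage [CompactSpace Y] [MeasurableSpace Y] [OpensMeasurableSpace Y]
    [IsProbabilityMeasure η] (f : C(Y, ℝ)) (μ : Measure Y) [IsFiniteMeasure μ]
    (hμ : ∀ k : K, ∫ y, f (k • y) ∂μ = ∫ y, f y ∂μ) :
    ∫ y, groupAverage η f y ∂μ = ∫ y, f y ∂μ := by
  have hf : Continuous (Function.uncurry fun (k : K) (y : Y) ↦ f (k⁻¹ • y)) := by fun_prop
  simp only [groupAverage]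
  rw [← integral_integral_swap_of_hasCompactSupport hf (.of_compactSpace _)]
  simp [hμ]

end GroupAverage

section EllisGroup

variable {G : Type*} [Group G] {Y : Type*} [TopologicalSpace Y] [MulAction G Y]
  [ContinuousConstSMul G Y]

@[simps]
def smulPair (g : G) : C(Y, Y) × C(Y, Y) :=
  (⟨(g • ·), continuous_const_smul g⟩, ⟨(g⁻¹ • ·), continuous_const_smul g⁻¹⟩)

variable (G Y) in
/-- The Ellis group is realised as the closure of the pairs `(g • ·, g⁻¹ • ·)` rather than of
the maps `g • ·` alone, so that inversion is the continuous map `Prod.swap`. -/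
def ellisPairs : Set (C(Y, Y) × C(Y, Y)) :=
  closure (range (smulPair (G := G) (Y := Y)))

lemma smulPair_one : smulPair (Y := Y) (1 : G) = (ContinuousMap.id Y, ContinuousMap.id Y) := by
  ext <;> simp

lemma smulPair_mul (g g' : G) :
    smulPair (Y := Y) (g * g') =
      ((smulPair g).1.comp (smulPair g').1, (smulPair g').2.comp (smulPair g).2) := by
  ext <;> simp [mul_smul]

lemma smulPair_mem_ellisPairs (g : G) : smulPair g ∈ ellisPairs G Y :=
  subset_closure ⟨g, rfl⟩

lemma swap_mem_ellisPairs {p : C(Y, Y) × C(Y, Y)} (hp : p ∈ ellisPairs G Y) :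
    p.swap ∈ ellisPairs G Y := by
  refine MapsTo.closure (fun _ ↦ ?_) continuous_swap hp
  rintro ⟨g, rfl⟩
  exact ⟨g⁻¹, by simp [smulPair]⟩

variable [LocallyCompactSpace Y]

lemma mul_mem_ellisPairs {p q : C(Y, Y) × C(Y, Y)} (hp : p ∈ ellisPairs G Y)
    (hq : q ∈ ellisPairs G Y) : (p.1.comp q.1, q.2.comp p.2) ∈ ellisPairs G Y := by
  have hcont : Continuous fun r : (C(Y, Y) × C(Y, Y)) × (C(Y, Y) × C(Y, Y)) ↦
      (r.1.1.comp r.2.1, r.2.2.comp r.1.2) :=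
    ((continuous_fst.comp continuous_fst).compCM (continuous_fst.comp continuous_snd)).prodMk
      ((continuous_snd.comp continuous_snd).compCM (continuous_snd.comp continuous_fst))
  refine MapsTo.closure (s := range (smulPair (G := G)) ×ˢ range smulPair)
    ?_ hcont (x := (p, q)) (by rw [closure_prod_eq]; exact ⟨hp, hq⟩)
  rintro ⟨-, -⟩ ⟨⟨g, rfl⟩, ⟨g', rfl⟩⟩
  exact ⟨g * g', smulPair_mul g g'⟩

variable [T2Space Y]

lemma comp_eq_id_of_mem_ellisPairs {p : C(Y, Y) × C(Y, Y)} (hp : p ∈ ellisPairs G Y) :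
    p.1.comp p.2 = ContinuousMap.id Y ∧ p.2.comp p.1 = ContinuousMap.id Y := by
  have hcont : Continuous fun q : C(Y, Y) × C(Y, Y) ↦ (q.1.comp q.2, q.2.comp q.1) :=
    (continuous_fst.compCM continuous_snd).prodMk (continuous_snd.compCM continuous_fst)
  have heq : EqOn (fun q : C(Y, Y) × C(Y, Y) ↦ (q.1.comp q.2, q.2.comp q.1))
      (fun _ ↦ (ContinuousMap.id Y, ContinuousMap.id Y)) (range (smulPair (G := G))) := by
    rintro _ ⟨g, rfl⟩
    ext <;> simp
  exact Prod.ext_iff.mp (heq.closure hcont continuous_const hp)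

variable (G Y) in
abbrev EllisGroup : Type _ := ellisPairs G Y

instance : Group (EllisGroup G Y) where
  mul a b := ⟨(a.1.1.comp b.1.1, b.1.2.comp a.1.2), mul_mem_ellisPairs a.2 b.2⟩
  one := ⟨(ContinuousMap.id Y, ContinuousMap.id Y),
    smulPair_one (G := G) (Y := Y) ▸ smulPair_mem_ellisPairs 1⟩
  inv a := ⟨a.1.swap, swap_mem_ellisPairs a.2⟩
  mul_assoc _ _ _ := rfl
  one_mul _ := rfl
  mul_one _ := rfl
  inv_mul_cancel a := Subtype.ext <| Prod.ext (comp_eq_id_of_mem_ellisPairs a.2).2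
    (comp_eq_id_of_mem_ellisPairs a.2).2

instance : MulAction (EllisGroup G Y) Y where
  smul e y := e.1.1 y
  one_smul _ := rfl
  mul_smul _ _ _ := rfl

instance : IsTopologicalGroup (EllisGroup G Y) where
  continuous_mul := by
    have h₁ : Continuous fun p : EllisGroup G Y × EllisGroup G Y ↦ p.1.1 :=
      continuous_subtype_val.comp continuous_fst
    have h₂ : Continuous fun p : EllisGroup G Y × EllisGroup G Y ↦ p.2.1 :=
      continuous_subtype_val.comp continuous_snd
    exact Continuous.subtype_mk
      (((continuous_fst.comp h₁).compCM (continuous_fst.comp h₂)).prodMk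
        ((continuous_snd.comp h₂).compCM (continuous_snd.comp h₁))) _
  continuous_inv := (continuous_swap.comp continuous_subtype_val).subtype_mk _

instance : ContinuousSMul (EllisGroup G Y) Y where
  continuous_smul := continuous_eval.comp
    (((continuous_fst.comp continuous_subtype_val).comp continuous_fst).prodMk continuous_snd)

variable (G Y) in
def toEllisGroup : G →* EllisGroup G Y where
  toFun g := ⟨smulPair g, smulPair_mem_ellisPairs g⟩
  map_one' := Subtype.ext smulPair_one
  map_mul' g g' := Subtype.ext (smulPair_mul g g')

@[simp]
lemma toEllisGroup_smul (g : G) (y : Y) : toEllisGroup G Y g • y = g • y := rfl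

lemma denseRange_toEllisGroup : DenseRange (toEllisGroup G Y) := by
  refine Subtype.dense_iff.mpr ?_
  rw [← range_comp]
  exact subset_rfl

end EllisGroup

lemma closure_orbit_subset_of_mem {G X : Type*} [Monoid G] [TopologicalSpace X] [MulAction G X]
    [ContinuousConstSMul G X] {x y : X} (hy : y ∈ closure (orbit G x)) :
    closure (orbit G y) ⊆ closure (orbit G x) :=
  closure_minimal (by rintro _ ⟨g, rfl⟩; exact smul_closure_orbit_subset g x (smul_mem_smul_set hy))
    isClosed_closure

lemma Continuous.apply_eq_of_mem_closure_orbit {G X Z : Type*} [Monoid G] [TopologicalSpace X]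
    [MulAction G X] [TopologicalSpace Z] [T1Space Z] {φ : X → Z} (hφ : Continuous φ)
    (hinv : ∀ (g : G) (x : X), φ (g • x) = φ x) {x z : X} (hz : z ∈ closure (orbit G x)) :
    φ z = φ x :=
  closure_minimal (by rintro _ ⟨g, rfl⟩; exact hinv g x) (isClosed_singleton.preimage hφ) hz

section EquicontinuousAction

variable {G : Type*} [Group G] {Y : Type*} [MetricSpace Y] [MulAction G Y]

lemma EquicontinuousAction.uniformEquicontinuous (hY : EquicontinuousAction G Y) :
    UniformEquicontinuous fun g : G ↦ (g • · : Y → Y) :=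
  Metric.uniformEquicontinuous_iff.mpr fun ε hε ↦ hY ε hε

lemma EquicontinuousAction.mem_closure_orbit_symm (hY : EquicontinuousAction G Y) {x y : Y}
    (hy : y ∈ closure (orbit G x)) : x ∈ closure (orbit G y) := by
  rw [Metric.mem_closure_iff] at hy ⊢
  intro ε hε
  obtain ⟨δ, hδ, hequi⟩ := hY ε hε
  obtain ⟨_, ⟨g, rfl⟩, hg⟩ := hy δ hδ
  refine ⟨g⁻¹ • y, ⟨g⁻¹, rfl⟩, ?_⟩
  simpa using hequi (g • x) y (by rwa [dist_comm]) g⁻¹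

variable [ContinuousConstSMul G Y]

lemma EquicontinuousAction.closure_orbit_eq_of_mem (hY : EquicontinuousAction G Y) {x y : Y}
    (hy : y ∈ closure (orbit G x)) : closure (orbit G y) = closure (orbit G x) :=
  (closure_orbit_subset_of_mem hy).antisymm
    (closure_orbit_subset_of_mem (hY.mem_closure_orbit_symm hy))

variable [CompactSpace Y]

lemma EquicontinuousAction.isCompact_ellisPairs (hY : EquicontinuousAction G Y) :
    IsCompact (ellisPairs G Y) := by
  set S := closure (range fun g : G ↦ (smulPair (Y := Y) g).1)
  have hS : IsCompact S :=
    ContinuousMap.isCompact_closure_range_of_equicontinuous hY.uniformEquicontinuous.equicontinuous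
  refine (hS.prod hS).of_isClosed_subset isClosed_closure ?_
  rw [← closure_prod_eq]
  refine closure_mono ?_
  rintro _ ⟨g, rfl⟩
  exact ⟨⟨g, rfl⟩, ⟨g⁻¹, rfl⟩⟩

end EquicontinuousAction

section UniqueErgodicity

variable {G : Type*} [Group G] {Y : Type*} [MetricSpace Y] [MulAction G Y] [MeasurableSpace Y]
  [BorelSpace Y]

lemma IsInvariantMeasure.integral_comp_smul {μ : Measure Y} (hμ : IsInvariantMeasure G μ)
    (f : C(Y, ℝ)) (g : G) : ∫ y, f (g • y) ∂μ = ∫ y, f y ∂μ := by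
  conv_rhs => rw [← (hμ g).map_eq]
  exact (integral_map (hμ g).measurable.aemeasurable f.continuous.aestronglyMeasurable).symm

variable [CompactSpace Y] [ContinuousConstSMul G Y]

lemma IsInvariantMeasure.integral_comp_ellisGroup_smul {μ : Measure Y} [IsFiniteMeasure μ]
    (hμ : IsInvariantMeasure G μ) (f : C(Y, ℝ)) (e : EllisGroup G Y) :
    ∫ y, f (e • y) ∂μ = ∫ y, f y ∂μ := by
  have hcont : Continuous fun e : EllisGroup G Y ↦ ∫ y, f (e • y) ∂μ :=
    continuous_of_dominated (bound := fun _ ↦ ‖f‖) (fun _ ↦ by fun_prop)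
      (fun _ ↦ .of_forall fun _ ↦ f.norm_coe_le_norm _) (integrable_const _)
      (.of_forall fun _ ↦ by fun_prop)
  exact congrFun (denseRange_toEllisGroup.equalizer hcont continuous_const
    (funext (hμ.integral_comp_smul f))) e

theorem EquicontinuousAction.measure_eq_of_measure_closure_orbit_eq_one
    (hY : EquicontinuousAction G Y) {μ ν : Measure Y} [IsProbabilityMeasure μ]
    [IsProbabilityMeasure ν] (hμ : IsInvariantMeasure G μ) (hν : IsInvariantMeasure G ν) {y : Y}
    (hμy : μ (closure (orbit G y)) = 1) (hνy : ν (closure (orbit G y)) = 1) : μ = ν := by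
  have : CompactSpace (EllisGroup G Y) := isCompact_iff_compactSpace.mp hY.isCompact_ellisPairs
  let _ : MeasurableSpace (EllisGroup G Y) := borel _
  have : BorelSpace (EllisGroup G Y) := ⟨rfl⟩
  let η := Measure.haarMeasure (⊤ : TopologicalSpace.PositiveCompacts (EllisGroup G Y))
  have : IsProbabilityMeasure η := by
    constructor
    rw [← TopologicalSpace.PositiveCompacts.coe_top]
    exact Measure.haarMeasure_self
  suffices key : ∀ ρ : Measure Y, [IsProbabilityMeasure ρ] → IsInvariantMeasure G ρ →
      ρ (closure (orbit G y)) = 1 → ∀ f : C(Y, ℝ), ∫ z, f z ∂ρ = groupAverage η f y by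
    refine ext_of_forall_integral_eq_of_IsFiniteMeasure fun f ↦ ?_
    exact (key μ hμ hμy f.toContinuousMap).trans (key ν hν hνy f.toContinuousMap).symm
  intro ρ _ hρ hρy f
  have hconst : ∀ z ∈ closure (orbit G y), groupAverage η f z = groupAverage η f y :=
    fun z hz ↦ (continuous_groupAverage η f).apply_eq_of_mem_closure_orbit
      (fun g z ↦ groupAverage_smul η f (toEllisGroup G Y g) z) hz
  calc ∫ z, f z ∂ρ = ∫ z, groupAverage η f z ∂ρ :=
        (integral_groupAverage η f ρ (hρ.integral_comp_ellisGroup_smul f)).symm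
    _ = ∫ _, groupAverage η f y ∂ρ := integral_congr_ae <| eventuallyEq_of_mem
        ((mem_ae_iff_prob_eq_one isClosed_closure.measurableSet).mpr hρy) hconst
    _ = groupAverage η f y := by simp

end UniqueErgodicity

lemma measSupport_eq_support {X : Type*} [TopologicalSpace X] [MeasurableSpace X]
    (μ : Measure X) : measSupport μ = μ.support := by
  rw [Measure.support_eq_forall_isOpen]
  ext x
  exact forall_congr' fun _ ↦ forall_comm

lemma measure_measSupport {X : Type*} [TopologicalSpace X] [HereditarilyLindelofSpace X]
    [MeasurableSpace X] [OpensMeasurableSpace X] (μ : Measure X) [IsProbabilityMeasure μ] :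
    μ (measSupport μ) = 1 := by
  rw [measSupport_eq_support, ← prob_compl_eq_zero_iff Measure.isClosed_support.measurableSet]
  exact Measure.measure_compl_support

namespace MeasureTheory.Measure

lemma map_image_eq_one {X Y : Type*} [MeasurableSpace X] [MeasurableSpace Y]
    {μ : Measure X} [IsProbabilityMeasure μ] {h : X → Y} (hh : Measurable h) {s : Set X}
    (hs : MeasurableSet (h '' s)) (hμs : μ s = 1) : μ.map h (h '' s) = 1 := by
  have : IsProbabilityMeasure (μ.map h) := isProbabilityMeasure_map hh.aemeasurable
  rw [← hμs, map_apply hh hs]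
  exact le_antisymm (hμs ▸ prob_le_one) (measure_mono (subset_preimage_image h s))

lemma map_map_eq_self_of_ae_leftInverse {X Y : Type*} [MeasurableSpace X]
    [MeasurableSpace Y] {μ : Measure X} {h : X → Y} {k : Y → X} (hh : Measurable h)
    (hk : Measurable k) (hkh : ∀ᵐ x ∂μ, k (h x) = x) : (μ.map h).map k = μ := by
  rw [map_map hk hh, map_congr (show k ∘ h =ᵐ[μ] id from hkh), map_id]

end MeasureTheory.Measure

section TopoIsomorphy

variable {G : Type*} [Group G] {X Y : Type*} [MulAction G X] [MulAction G Y]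

lemma IsInvariantMeasure.half_add [MeasurableSpace X] {μ ν : Measure X}
    (hμ : IsInvariantMeasure G μ) (hν : IsInvariantMeasure G ν) :
    IsInvariantMeasure G ((2⁻¹ : ℝ≥0∞) • μ + (2⁻¹ : ℝ≥0∞) • ν) :=
  fun g ↦ ⟨(hμ g).measurable, by
    rw [Measure.map_add _ _ (hμ g).measurable, Measure.map_smul, Measure.map_smul,
      (hμ g).map_eq, (hν g).map_eq]⟩

variable [TopologicalSpace X] [TopologicalSpace Y] {h : X → Y}

lemma IsFactorMap.image_closure_orbit [CompactSpace X] [T2Space Y] (hh : IsFactorMap G h)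
    (x : X) : h '' closure (orbit G x) = closure (orbit G (h x)) := by
  rw [image_closure_of_isCompact isClosed_closure.isCompact hh.1.continuousOn]
  congr 1
  rw [orbit, ← range_comp]
  exact congrArg range (funext fun g ↦ hh.2.2 g x)

variable [MeasurableSpace X] [MeasurableSpace Y]

lemma IsInvariantMeasure.map [OpensMeasurableSpace X] [BorelSpace Y] [ContinuousConstSMul G Y]
    {μ : Measure X} (hμ : IsInvariantMeasure G μ) (hh : IsFactorMap G h) :
    IsInvariantMeasure G (μ.map h) := by
  have hmeas : Measurable h := hh.1.measurable
  intro g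
  refine ⟨(continuous_const_smul g).measurable, ?_⟩
  have hcomm : (g • · : Y → Y) ∘ h = h ∘ (g • ·) := funext fun x ↦ (hh.2.2 g x).symm
  rw [Measure.map_map (continuous_const_smul g).measurable hmeas, hcomm,
    ← Measure.map_map hmeas (hμ g).measurable, (hμ g).map_eq]

lemma IsTopoIsomorphy.eq_of_map_eq (hh : IsTopoIsomorphy G h) {μ ν : Measure X}
    [IsProbabilityMeasure μ] [IsProbabilityMeasure ν] (hμ : IsInvariantMeasure G μ)
    (hν : IsInvariantMeasure G ν) (hmap : μ.map h = ν.map h) : μ = ν := by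
  set ρ := (2⁻¹ : ℝ≥0∞) • μ + (2⁻¹ : ℝ≥0∞) • ν
  have hρ : IsProbabilityMeasure ρ := ⟨by simp [ρ, ENNReal.inv_two_add_inv_two]⟩
  obtain ⟨hmeas, -, M, -, k, hM, -, hρM, -, hk, -, hkh, -⟩ := hh.2 ρ hρ (hμ.half_add hν)
  have hae : ∀ᵐ x ∂ρ, k (h x) = x := mem_of_superset ((mem_ae_iff_prob_eq_one hM).mpr hρM) hkh
  have hμρ : μ ≪ ρ := (Measure.absolutelyContinuous_smul (by simp)).add_right _
  have hνρ : ν ≪ ρ := (Measure.absolutelyContinuous_smul (by simp)).add_right' _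
  calc μ = (μ.map h).map k :=
        (Measure.map_map_eq_self_of_ae_leftInverse hmeas hk (hμρ hae)).symm
    _ = (ν.map h).map k := by rw [hmap]
    _ = ν := Measure.map_map_eq_self_of_ae_leftInverse hmeas hk (hνρ hae)

end TopoIsomorphy

theorem image_supports_disjoint_general {G : Type*} [Group G] [TopologicalSpace G]
    {X Y : Type*} [MetricSpace X] [CompactSpace X] [MulAction G X]
    [MeasurableSpace X] [BorelSpace X] [MetricSpace Y] [CompactSpace Y] [MulAction G Y]
    [ContinuousSMul G Y] [MeasurableSpace Y] [BorelSpace Y]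
    (h : X → Y) (hY : EquicontinuousAction G Y) (hh : IsTopoIsomorphy G h)
    (μ ν : Measure X) [IsProbabilityMeasure μ] [IsProbabilityMeasure ν]
    (hμ : IsErgodicMeasure G μ) (hν : IsErgodicMeasure G ν)
    (A B : Set X) (hA : IsTransitiveSet G A) (hB : IsTransitiveSet G B)
    (hμA : measSupport μ = A) (hνB : measSupport ν = B) (hne : μ ≠ ν) :
    Disjoint (h '' A) (h '' B) := by
  refine not_not.mp fun hAB ↦ hne ?_
  obtain ⟨y, hyA, hyB⟩ := not_disjoint_iff.mp hAB
  have hmeas : Measurable h := hh.1.1.measurable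
  have hfull : ∀ {C : Set X} {ρ : Measure X} [IsProbabilityMeasure ρ], IsTransitiveSet G C →
      measSupport ρ = C → y ∈ h '' C → ρ.map h (closure (orbit G y)) = 1 := by
    rintro C ρ _ ⟨-, -, -, x, -, hx⟩ rfl hyC
    have hC : h '' measSupport ρ = closure (orbit G y) := by
      rw [← hx, hh.1.image_closure_orbit] at hyC ⊢
      exact (hY.closure_orbit_eq_of_mem hyC).symm
    rw [← hC]
    exact Measure.map_image_eq_one hmeas (hC ▸ isClosed_closure.measurableSet)
      (measure_measSupport ρ)
  have : IsProbabilityMeasure (μ.map h) := Measure.isProbabilityMeasure_map hmeas.aemeasurable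
  have : IsProbabilityMeasure (ν.map h) := Measure.isProbabilityMeasure_map hmeas.aemeasurable
  exact hh.eq_of_map_eq hμ.1 hν.1 <| hY.measure_eq_of_measure_closure_orbit_eq_one
    (hμ.1.map hh.1) (hν.1.map hh.1) (hfull hA hμA hyA) (hfull hB hνB hyB)

/-- For a topo-isomorphic extension of an equicontinuous system, the images
of the (transitive) supports of two distinct ergodic measures are disjoint. -/
theorem image_supports_disjoint {G : Type*} [Group G] [TopologicalSpace G]
    [IsTopologicalGroup G] [LocallyCompactSpace G] [SigmaCompactSpace G] [MeasurableSpace G]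
    [BorelSpace G] (m : Measure G) [m.IsHaarMeasure] (hG : AmenableGroup m)
    {X Y : Type*} [MetricSpace X] [CompactSpace X] [MulAction G X] [ContinuousSMul G X]
    [MeasurableSpace X] [BorelSpace X] [MetricSpace Y] [CompactSpace Y] [MulAction G Y]
    [ContinuousSMul G Y] [MeasurableSpace Y] [BorelSpace Y]
    (h : X → Y) (hY : EquicontinuousAction G Y) (hh : IsTopoIsomorphy G h)
    (μ ν : Measure X) [IsProbabilityMeasure μ] [IsProbabilityMeasure ν]
    (hμ : IsErgodicMeasure G μ) (hν : IsErgodicMeasure G ν)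
    (A B : Set X) (hA : IsTransitiveSet G A) (hB : IsTransitiveSet G B)
    (hμA : measSupport μ = A) (hνB : measSupport ν = B) (hne : μ ≠ ν) :
    Disjoint (h '' A) (h '' B) :=
  image_supports_disjoint_general h hY hh μ ν hμ hν A B hA hB hμA hνB hne
end
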